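/- Let w_0, w_1, ..., w_{k-1} be reals such that for all x ∈ {-1,1}^k, Σ_{i=0}^{k-1} w_i L_i(x) ≥ 0 iff g(x) = 1, where L_0(x) = x_1 + x_k, L_i(x) = x_i - x_{i+1} for 1 ≤ i ≤ k-1, and g(x) = x_k if all bits of x are equal and -x_k otherwise. Then w_j > 0 for all 0 ≤ j ≤ k-1, and w_j > w_{j-1} for all 2 ≤ j ≤ k-1. -/
import Mathlib


/-- The linear forms `L_0(x) = x_1 + x_k`, `L_i(x) = x_i - x_{i+1}` for `1 ≤ i ≤ k-1`
(variables 0-indexed). -/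
def Lform {k : ℕ} (hk : 2 ≤ k) (x : Fin k → ℤ) (i : Fin k) : ℤ :=
  if (i : ℕ) = 0 then x ⟨0, by omega⟩ + x ⟨k - 1, by omega⟩
  else x ⟨(i : ℕ) - 1, by omega⟩ - x i

/-- The function `g : {-1,1}^k → {-1,1}`: `x_k` if all bits equal, `-x_k` otherwise. -/
def gfun {k : ℕ} (hk : 2 ≤ k) (x : Fin k → ℤ) : ℤ :=
  if ∀ i j, x i = x j then x ⟨k - 1, by omega⟩ else -x ⟨k - 1, by omega⟩

def xconst (k : ℕ) : Fin k → ℤ := fun _ => -1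
def xstep (k j : ℕ) : Fin k → ℤ := fun i => if (i : ℕ) < j then -1 else 1
def xone (k m : ℕ) : Fin k → ℤ := fun i => if (i : ℕ) = m then -1 else 1

lemma xconst_pm (k : ℕ) : ∀ i, xconst k i = 1 ∨ xconst k i = -1 := fun _ => Or.inr rfl
lemma xstep_pm (k j : ℕ) : ∀ i, xstep k j i = 1 ∨ xstep k j i = -1 := by
  intro i; unfold xstep; split_ifs <;> simp
lemma xone_pm (k m : ℕ) : ∀ i, xone k m i = 1 ∨ xone k m i = -1 := by
  intro i; unfold xone; split_ifs <;> simp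

lemma gconst (k : ℕ) (hk : 3 ≤ k) (h2 : 2 ≤ k) : gfun h2 (xconst k) = -1 := by
  simp [gfun, xconst]

lemma gstep (k : ℕ) (hk : 3 ≤ k) (j : ℕ) (hj1 : 1 ≤ j) (hjk : j < k) (h2 : 2 ≤ k) :
    gfun h2 (xstep k j) = -1 := by
  unfold gfun xstep
  rw [if_neg, if_neg (by simp only [Fin.val_mk]; omega)]
  intro h
  have := h ⟨0, by omega⟩ ⟨k - 1, by omega⟩
  simp only [Fin.val_mk] at this
  rw [if_pos (by omega), if_neg (by omega)] at this
  omega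

lemma gone (k : ℕ) (hk : 3 ≤ k) (m : ℕ) (hm1 : 1 ≤ m) (hm2 : m ≤ k - 2) (h2 : 2 ≤ k) :
    gfun h2 (xone k m) = -1 := by
  unfold gfun xone
  rw [if_neg, if_neg (by simp only [Fin.val_mk]; omega)]
  intro h
  have := h ⟨0, by omega⟩ ⟨m, by omega⟩
  simp only [Fin.val_mk] at this
  rw [if_neg (by omega)] at this
  simp at this

lemma sum_xconst (k : ℕ) (hk : 3 ≤ k) (w : Fin k → ℝ) (h2 : 2 ≤ k) :
    ∑ i, w i * ((Lform h2 (xconst k) i : ℤ) : ℝ) = -2 * w ⟨0, by omega⟩ := by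
  have key : ∀ i : Fin k, w i * ((Lform h2 (xconst k) i : ℤ) : ℝ)
      = if i = ⟨0, by omega⟩ then -2 * w i else 0 := by
    intro i
    unfold Lform xconst
    simp only [Fin.ext_iff, Fin.val_mk]
    split_ifs <;> first | omega | (push_cast; ring)
  rw [Finset.sum_congr rfl (fun i _ => key i), Finset.sum_ite_eq' Finset.univ]
  simp

lemma sum_xstep (k : ℕ) (hk : 3 ≤ k) (w : Fin k → ℝ) (j : Fin k) (hj : 1 ≤ (j : ℕ))
    (h2 : 2 ≤ k) :
    ∑ i, w i * ((Lform h2 (xstep k (j : ℕ)) i : ℤ) : ℝ) = -2 * w j := by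
  have hjk : (j : ℕ) < k := j.isLt
  have key : ∀ i : Fin k, w i * ((Lform h2 (xstep k (j : ℕ)) i : ℤ) : ℝ)
      = if i = j then -2 * w i else 0 := by
    intro i
    unfold Lform xstep
    simp only [Fin.ext_iff, Fin.val_mk]
    split_ifs <;> first | omega | (push_cast; ring)
  rw [Finset.sum_congr rfl (fun i _ => key i), Finset.sum_ite_eq' Finset.univ]
  simp

lemma sum_xone (k : ℕ) (hk : 3 ≤ k) (w : Fin k → ℝ) (m : ℕ) (hm1 : 1 ≤ m)
    (hm2 : m ≤ k - 2) (h2 : 2 ≤ k) :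
    ∑ i, w i * ((Lform h2 (xone k m) i : ℤ) : ℝ)
      = 2 * w ⟨0, by omega⟩ + 2 * w ⟨m, by omega⟩ - 2 * w ⟨m + 1, by omega⟩ := by
  have key : ∀ i : Fin k, w i * ((Lform h2 (xone k m) i : ℤ) : ℝ)
      = ((if i = ⟨0, by omega⟩ then 2 * w i else 0)
          + (if i = ⟨m, by omega⟩ then 2 * w i else 0))
          + (if i = ⟨m + 1, by omega⟩ then -2 * w i else 0) := by
    intro i
    unfold Lform xone
    simp only [Fin.ext_iff, Fin.val_mk]
    split_ifs <;> first | omega | (push_cast; ring)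
  rw [Finset.sum_congr rfl (fun i _ => key i), Finset.sum_add_distrib,
    Finset.sum_add_distrib, Finset.sum_ite_eq' Finset.univ, Finset.sum_ite_eq' Finset.univ,
    Finset.sum_ite_eq' Finset.univ]
  simp
  ring

/-- If `Σ_{i=0}^{k-1} w_i L_i(x)` sign-represents `g` on `{-1,1}^k`, then all weights are
positive and they strictly increase: `w_{j-1} < w_j` for `2 ≤ j ≤ k-1`. -/
theorem stmt8 (k : ℕ) (hk : 3 ≤ k) (w : Fin k → ℝ)
    (hrep : ∀ x : Fin k → ℤ, (∀ i, x i = 1 ∨ x i = -1) →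
      ((0 ≤ ∑ i, w i * ((Lform (by omega) x i : ℤ) : ℝ)) ↔ gfun (by omega) x = 1)) :
    (∀ j, 0 < w j) ∧
      ∀ j : Fin k, 2 ≤ (j : ℕ) → w ⟨(j : ℕ) - 1, by omega⟩ < w j := by
  have h0 : 0 < w ⟨0, by omega⟩ := by
    have hx := hrep (xconst k) (xconst_pm k)
    rw [gconst k hk, sum_xconst k hk w] at hx
    simp only [show ((-1 : ℤ) = 1) ↔ False by norm_num, iff_false, not_le] at hx
    linarith
  have hpos : ∀ j, 0 < w j := by
    intro j
    by_cases hj : (j : ℕ) = 0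
    · have : j = ⟨0, by omega⟩ := Fin.ext hj
      rw [this]; exact h0
    · have hx := hrep (xstep k (j : ℕ)) (xstep_pm k _)
      rw [gstep k hk (j : ℕ) (by omega) j.isLt, sum_xstep k hk w j (by omega)] at hx
      simp only [show ((-1 : ℤ) = 1) ↔ False by norm_num, iff_false, not_le] at hx
      linarith
  refine ⟨hpos, ?_⟩
  intro j hj2
  have hjk : (j : ℕ) < k := j.isLt
  have hx := hrep (xone k ((j : ℕ) - 1)) (xone_pm k _)
  rw [gone k hk ((j : ℕ) - 1) (by omega) (by omega),
    sum_xone k hk w ((j : ℕ) - 1) (by omega) (by omega)] at hx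
  simp only [show ((-1 : ℤ) = 1) ↔ False by norm_num, iff_false, not_le] at hx
  have he : (⟨(j : ℕ) - 1 + 1, by omega⟩ : Fin k) = j := Fin.ext (by simp; omega)
  rw [he] at hx
  have he2 : (⟨(j : ℕ) - 1, by omega⟩ : Fin k) = (⟨(j : ℕ) - 1, by omega⟩ : Fin k) := rfl
  linarith [hx, h0]
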